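/- In any t-sequential legal history S obtained as a topological sort of an acyclic opacity graph OPG(H, <<), for any successful read r_k(x,v) reading from writer T_j and any committed transaction T_i writing a different value to x, T_i cannot be positioned between T_j and T_k in S. -/

import Mathlib

/- A framework for software transactional memory histories, following
   the paper "multiversion timestamp ordering STM".  Transactions,
   objects and values are modelled as natural numbers; transaction
   identifiers coincide with their timestamps.  Values written by the
   transactions are assumed unique, so the reads-from relation is
   determined by the events themselves. -/

/-- Transactional events. -/
inductive Event where
  | read   (t x v : ℕ) : Event
  | write  (t x v : ℕ) : Event
  | commit (t : ℕ) : Event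
  | abort  (t : ℕ) : Event
deriving DecidableEq

/-- The transaction issuing an event. -/
def Event.txn : Event → ℕ
  | .read t _ _ => t
  | .write t _ _ => t
  | .commit t => t
  | .abort t => t

/-- A (sequential) history is a finite sequence of events. -/
abbrev History := List Event

/-- `e` occurs strictly before `f` in `H`. -/
def before (H : History) (e f : Event) : Prop :=
  ∃ i j : ℕ, i < j ∧ H[i]? = some e ∧ H[j]? = some f

def committed (H : History) (t : ℕ) : Prop := Event.commit t ∈ H
def abortedTxn (H : History) (t : ℕ) : Prop := Event.abort t ∈ H
def started (H : History) (t : ℕ) : Prop := ∃ e ∈ H, e.txn = t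
def terminated (H : History) (t : ℕ) : Prop := committed H t ∨ abortedTxn H t
def live (H : History) (t : ℕ) : Prop := started H t ∧ ¬ terminated H t
def writesTo (H : History) (t x : ℕ) : Prop := ∃ v, Event.write t x v ∈ H
def readOnly (H : History) (t : ℕ) : Prop := ∀ x v, Event.write t x v ∉ H

/-- `T_k` reads `x` (with value `v`) from the committed transaction `T_j`.
    Since written values are unique, this is determined by the events. -/
def readsFrom (H : History) (j k x v : ℕ) : Prop :=
  Event.read k x v ∈ H ∧ Event.write j x v ∈ H ∧ committed H j

/-- A version order assigns, for every object `x`, an order on the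
    versions `x_i` created by committed transactions:
    `VO x i j` means `x_i ≪ x_j`. -/
abbrev VersionOrder := ℕ → ℕ → ℕ → Prop

/-- `VO` is a (nonreflexive, transitive, total) order on the versions of each
    object created by committed transactions of `H`. -/
def IsVersionOrder (H : History) (VO : VersionOrder) : Prop :=
  (∀ x i j, VO x i j → committed H i ∧ committed H j ∧
      writesTo H i x ∧ writesTo H j x ∧ i ≠ j) ∧
  (∀ x i, ¬ VO x i i) ∧
  (∀ x i j k, VO x i j → VO x j k → VO x i k) ∧
  (∀ x i j, committed H i → committed H j → writesTo H i x → writesTo H j x →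
      i ≠ j → VO x i j ∨ VO x j i)

/-- Real-time edge: `T_i` commits before `T_j` starts (all of `T_j`'s events). -/
def rtEdge (H : History) (i j : ℕ) : Prop :=
  committed H i ∧ started H j ∧
    ∀ e ∈ H, e.txn = j → before H (Event.commit i) e

/-- Reads-from edge: `T_j` reads some object from `T_i`. -/
def rfEdge (H : History) (i j : ℕ) : Prop := ∃ x v, readsFrom H i j x v

/-- Multiversion edges, relative to a version order:
    for each successful read `r_k(x,v)` reading the version created by the
    committed transaction `T_j`, and each (distinct) committed transaction `T_i`
    writing a different value `u` to `x`: an edge `T_i → T_j` if `x_i ≪ x_j`,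
    and an edge `T_k → T_i` if `x_j ≪ x_i`. -/
def mvEdge (H : History) (VO : VersionOrder) (a b : ℕ) : Prop :=
  ∃ x v u j k i, readsFrom H j k x v ∧
    committed H i ∧ Event.write i x u ∈ H ∧ u ≠ v ∧ i ≠ j ∧ i ≠ k ∧
    ((VO x i j ∧ a = i ∧ b = j) ∨ (VO x j i ∧ a = k ∧ b = i))

/-- Edges of the opacity graph `OPG(H, VO)`, with the real-time edges taken
    with respect to the history `Hrt`. -/
def opgEdgeRT (Hrt H : History) (VO : VersionOrder) (a b : ℕ) : Prop :=
  rtEdge Hrt a b ∨ rfEdge H a b ∨ mvEdge H VO a b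

/-- Edges of the opacity graph `OPG(H, VO)`. -/
def opgEdge (H : History) (VO : VersionOrder) : ℕ → ℕ → Prop :=
  opgEdgeRT H H VO

/-- A directed graph (edge relation) on transactions is acyclic. -/
def Acyclic (E : ℕ → ℕ → Prop) : Prop := ∀ t, ¬ Relation.TransGen E t t

/-- `H` is t-sequential: no event of another transaction occurs between two
    events of the same transaction. -/
def tSequential (H : History) : Prop :=
  ∀ e f g, e ∈ H → f ∈ H → g ∈ H → e.txn = g.txn → e.txn ≠ f.txn →
    ¬ (before H e f ∧ before H f g)

/-- `H` is legal: every successful read returns the value written by the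
    last committed transaction writing `x` before it. -/
def legal (H : History) : Prop :=
  ∀ k x v, Event.read k x v ∈ H →
    ∃ j, Event.write j x v ∈ H ∧ committed H j ∧
      before H (Event.commit j) (Event.read k x v) ∧
      ∀ i u, Event.write i x u ∈ H → committed H i →
        before H (Event.commit i) (Event.read k x v) →
        i = j ∨ before H (Event.commit i) (Event.commit j)

/-- `H` is valid: every successful read is preceded by the commit of a
    transaction writing that value to that object. -/
def validH (H : History) : Prop :=
  ∀ k x v, Event.read k x v ∈ H →
    ∃ j, Event.write j x v ∈ H ∧ before H (Event.commit j) (Event.read k x v)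

/-- Two histories are equivalent if they have the same set of events. -/
def equivalentH (H H' : History) : Prop := ∀ e, e ∈ H ↔ e ∈ H'

/-- `Hb` is the completion of `H`: it extends `H` with abort events for
    precisely the incomplete (live) transactions of `H`. -/
def isCompletion (H Hb : History) : Prop :=
  ∃ L : List ℕ, Hb = H ++ L.map Event.abort ∧ L.Nodup ∧
    (∀ t, t ∈ L ↔ live H t)

/-- `S` respects the (transaction-level) real-time order of `H`. -/
def respectsRT (H S : History) : Prop := ∀ i j, rtEdge H i j → rtEdge S i j

/-- Opacity: there is a legal t-sequential history equivalent to the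
    completion of `H` that respects the real-time order of `H`. -/
def isOpaque (H : History) : Prop :=
  ∃ Hb S, isCompletion H Hb ∧ tSequential S ∧ legal S ∧
    equivalentH S Hb ∧ respectsRT H S

/-- The version order `≪_S` induced by a t-sequential history `S`:
    `x_i ≪_S x_j` iff the committed writers `T_i`, `T_j` of `x`
    satisfy `T_i <_S T_j`. -/
def seqVO (S : History) : VersionOrder := fun x i j =>
  committed S i ∧ committed S j ∧ writesTo S i x ∧ writesTo S j x ∧ i ≠ j ∧
    before S (Event.commit i) (Event.commit j)

/-- The timestamp version order `≪_to`: versions are ordered by the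
    timestamps of the committed transactions that created them. -/
def tsVO (H : History) : VersionOrder := fun x i j =>
  committed H i ∧ committed H j ∧ writesTo H i x ∧ writesTo H j x ∧ i < j

/-- `T_j` is the committed writer of `x` with the largest timestamp smaller
    than `l`. -/
def isLargestWriterBelow (H : History) (x l j : ℕ) : Prop :=
  committed H j ∧ writesTo H j x ∧ j < l ∧
    ∀ m, committed H m → writesTo H m x → m < l → m ≤ j

/-- `T_k` is the committed writer of `x` with the smallest timestamp greater
    than `l`. -/
def isSmallestWriterAbove (H : History) (x l k : ℕ) : Prop :=
  committed H k ∧ writesTo H k x ∧ l < k ∧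
    ∀ m, committed H m → writesTo H m x → l < m → k ≤ m

/-- `T_i` precedes `T_j` in the t-sequential history `S`: every event of
    `T_i` occurs before every event of `T_j`. -/
def txnPrec (S : History) (i j : ℕ) : Prop :=
  ∀ e f, e ∈ S → f ∈ S → e.txn = i → f.txn = j → before S e f

theorem before_asymm {S : History} (hN : S.Nodup) {e f : Event} :
    before S e f → ¬ before S f e := by
  rintro ⟨a, b, hab, ha, hb⟩ ⟨c, d, hcd, hc, hd⟩
  have hbc : b = c :=
    (List.getElem?_inj (List.getElem?_eq_some_iff.mp hb).1 hN).mp (hb.trans hc.symm)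
  have had : a = d :=
    (List.getElem?_inj (List.getElem?_eq_some_iff.mp ha).1 hN).mp (ha.trans hd.symm)
  omega

theorem txnPrec_asymm {S : History} (hN : S.Nodup) {a b : ℕ} {e f : Event}
    (he : e ∈ S) (hf : f ∈ S) (hea : e.txn = a) (hfb : f.txn = b) :
    txnPrec S a b → ¬ txnPrec S b a :=
  fun hab hba => before_asymm hN (hab e f he hf hea hfb) (hba f e hf he hfb hea)

theorem isCompletion.subset {H Hb : History} (hcomp : isCompletion H Hb) : H ⊆ Hb := by
  obtain ⟨L, rfl, -, -⟩ := hcomp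
  exact List.subset_append_left _ _

/-- Totality of `≪` on the committed writers of `x` decides which of the two multiversion
edges is present. -/
theorem opgEdge_writer_before_or_reader_before {H : History} {VO : VersionOrder}
    (hVO : IsVersionOrder H VO) {j k x v i u : ℕ} (hrf : readsFrom H j k x v)
    (hci : committed H i) (hwi : Event.write i x u ∈ H) (huv : u ≠ v)
    (hij : i ≠ j) (hik : i ≠ k) :
    opgEdge H VO i j ∨ opgEdge H VO k i := by
  have hcj : committed H j := hrf.2.2
  rcases hVO.2.2.2 x i j hci hcj ⟨u, hwi⟩ ⟨v, hrf.2.1⟩ hij with hVij | hVji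
  · exact .inl <| .inr <| .inr
      ⟨x, v, u, j, k, i, hrf, hci, hwi, huv, hij, hik, .inl ⟨hVij, rfl, rfl⟩⟩
  · exact .inr <| .inr <| .inr
      ⟨x, v, u, j, k, i, hrf, hci, hwi, huv, hij, hik, .inr ⟨hVji, rfl, rfl⟩⟩

theorem topo_sort_no_intermediate_writer_general (H Hb S : History)
    (VO : VersionOrder) (hVO : IsVersionOrder H VO)
    (hN : S.Nodup)
    (hcomp : isCompletion H Hb) (heq : equivalentH S Hb)
    (htopo : ∀ a b, opgEdge H VO a b → txnPrec S a b)
    {j k x v i u : ℕ} (hrf : readsFrom H j k x v)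
    (hci : committed H i) (hwi : Event.write i x u ∈ H) (huv : u ≠ v)
    (hij : i ≠ j) (hik : i ≠ k) :
    ¬ (txnPrec S j i ∧ txnPrec S i k) := by
  rintro ⟨hji_prec, hik_prec⟩
  have hHS : ∀ e ∈ H, e ∈ S := fun e he => (heq e).mpr (hcomp.subset he)
  rcases opgEdge_writer_before_or_reader_before hVO hrf hci hwi huv hij hik with
    hij_edge | hki_edge
  · exact txnPrec_asymm hN (hHS _ hrf.2.2) (hHS _ hci) rfl rfl hji_prec (htopo i j hij_edge)
  · exact txnPrec_asymm hN (hHS _ hci) (hHS _ hrf.1) rfl rfl hik_prec (htopo k i hki_edge)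

/-- in a t-sequential history `S` obtained as a topological sort
    of an acyclic opacity graph `OPG(H, ≪)` (equivalent to the completion of
    `H`), for any successful read `r_k(x,v)` reading from the writer `T_j` and
    any other committed transaction `T_i` writing a different value `u ≠ v` to
    `x`, `T_i` is not positioned between `T_j` and `T_k` in `S`. -/
theorem topo_sort_no_intermediate_writer (H Hb S : History)
    (VO : VersionOrder) (hVO : IsVersionOrder H VO)
    (hN : S.Nodup) (hseq : tSequential S)
    (hcomp : isCompletion H Hb) (heq : equivalentH S Hb)
    (hacyc : Acyclic (opgEdge H VO))
    (htopo : ∀ a b, opgEdge H VO a b → txnPrec S a b)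
    {j k x v i u : ℕ} (hrf : readsFrom H j k x v)
    (hci : committed H i) (hwi : Event.write i x u ∈ H) (huv : u ≠ v)
    (hij : i ≠ j) (hik : i ≠ k) :
    ¬ (txnPrec S j i ∧ txnPrec S i k) :=
  topo_sort_no_intermediate_writer_general H Hb S VO hVO hN hcomp heq htopo hrf hci hwi huv hij hik
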